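/- Let q = 3 and x ∈ F_3^{n-1} satisfy the constraints σ(x) = μ, where σ(x_0,...,x_{n-2}) = (x_0+x_1+x_2, x_3+x_4+x_5, ..., x_{n-4}+x_{n-3}+x_{n-2}). Suppose λ : σ^{-1}(μ) → Z/3 satisfies λ(x) ≠ λ(y) whenever d(x,y) = 2. Then λ(x) = λ(x + e) where e = (1,1,1,0,...,0), i.e., λ is invariant under adding 1 to all three coordinates of any block. -/

import Mathlib

/-!
Inside the block `j`, the vectors `x + (0,1,2)` and `x + (0,2,1)` lie in the fiber together with
both `x` and `x + (1,1,1)`, and each of the triangles `{x, x + (0,1,2), x + (0,2,1)}`,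
`{x + (1,1,1), x + (0,1,2), x + (0,2,1)}` has all sides of Hamming length 2. So `λ` takes three
distinct values on each triangle; as `ZMod 3` has only three elements, `λ x` and `λ (x + (1,1,1))`
are both the value missed by the common edge.
-/

/-- The fiber `σ⁻¹(μ)`: tuples in `F_3^{3t}` whose `j`-th block of three consecutive
coordinates sums to `μ_j`. -/
def sigmaFiber (t : ℕ) (μ : Fin t → ZMod 3) : Set (Fin (3 * t) → ZMod 3) :=
  {x | ∀ j : Fin t,
    x ⟨3 * j.1, by have := j.2; omega⟩ + x ⟨3 * j.1 + 1, by have := j.2; omega⟩ +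
      x ⟨3 * j.1 + 2, by have := j.2; omega⟩ = μ j}

/-- The vector with `1` on the three coordinates of the `j`-th block and `0` elsewhere. -/
def blockVec (t : ℕ) (j : Fin t) : Fin (3 * t) → ZMod 3 :=
  fun k => if 3 * j.1 ≤ k.1 ∧ k.1 < 3 * j.1 + 3 then 1 else 0

open Function Finset

theorem hammingDist_extend {ι κ β : Type*} [Fintype ι] [Fintype κ] [DecidableEq β]
    {f : κ → ι} (hf : Injective f) (v w : κ → β) (e : ι → β) :
    hammingDist (extend f v e) (extend f w e) = hammingDist v w := by
  have hsupp : ({i | extend f v e i ≠ extend f w e i} : Finset ι) =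
      ({k | v k ≠ w k} : Finset κ).map ⟨f, hf⟩ := by
    ext i
    by_cases hi : ∃ k, f k = i
    · obtain ⟨k, rfl⟩ := hi
      simp [hf.extend_apply]
    · simpa [extend_apply' _ _ _ hi] using fun k _ hk => hi ⟨k, hk⟩
  rw [hammingDist, hsupp, card_map, hammingDist]

theorem hammingDist_add_add_left {ι β : Type*} [Fintype ι] [DecidableEq β]
    [AddLeftCancelSemigroup β] (x v w : ι → β) : hammingDist (x + v) (x + w) = hammingDist v w :=
  hammingDist_comp (fun i => (x i + ·)) fun i => add_right_injective (x i)

theorem eq_of_ne_of_card_le_three {α : Type*} [Fintype α] (hα : Fintype.card α ≤ 3) {a b c d : α}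
    (hbc : b ≠ c) (hab : a ≠ b) (hac : a ≠ c) (hdb : d ≠ b) (hdc : d ≠ c) : a = d := by
  classical
  by_contra had
  have := card_le_univ ({a, b, c, d} : Finset α)
  rw [card_insert_of_notMem (by simp [hab, hac, had]),
    card_insert_of_notMem (by simp [hbc, hdb.symm]), card_pair hdc.symm] at this
  omega

section Blocks

variable {t : ℕ}

def blockIdx (j : Fin t) (r : Fin 3) : Fin (3 * t) :=
  ⟨3 * j + r, by omega⟩

theorem val_blockIdx (j : Fin t) (r : Fin 3) : (blockIdx j r : ℕ) = 3 * j + r :=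
  rfl

theorem blockIdx_eq_blockIdx_iff {j j' : Fin t} {r r' : Fin 3} :
    blockIdx j r = blockIdx j' r' ↔ j = j' ∧ r = r' := by
  simp only [Fin.ext_iff, val_blockIdx]
  omega

theorem blockIdx_injective (j : Fin t) : Injective (blockIdx j) :=
  fun _ _ h => (blockIdx_eq_blockIdx_iff.mp h).2

theorem exists_blockIdx_eq (k : Fin (3 * t)) : ∃ j r, blockIdx j r = k :=
  ⟨⟨k / 3, by omega⟩, ⟨k % 3, by omega⟩, Fin.ext <| by rw [val_blockIdx]; dsimp only; omega⟩

theorem mem_sigmaFiber_iff {μ : Fin t → ZMod 3} {x : Fin (3 * t) → ZMod 3} :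
    x ∈ sigmaFiber t μ ↔ ∀ j, ∑ r, x (blockIdx j r) = μ j := by
  simp [sigmaFiber, Fin.sum_univ_three, blockIdx]

noncomputable def blockPattern {R : Type*} [Zero R] (j : Fin t) (v : Fin 3 → R) :
    Fin (3 * t) → R :=
  extend (blockIdx j) v 0

theorem blockPattern_blockIdx {R : Type*} [Zero R] (j j' : Fin t) (v : Fin 3 → R) (r : Fin 3) :
    blockPattern j v (blockIdx j' r) = if j' = j then v r else 0 := by
  split_ifs with h
  · subst h
    exact (blockIdx_injective j').extend_apply v 0 r
  · refine extend_apply' _ _ _ ?_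
    rintro ⟨r', hr'⟩
    exact h (blockIdx_eq_blockIdx_iff.mp hr').1.symm

theorem blockPattern_zero {R : Type*} [Zero R] (j : Fin t) :
    blockPattern j (0 : Fin 3 → R) = 0 := by
  funext k
  obtain ⟨j', r, rfl⟩ := exists_blockIdx_eq k
  simp [blockPattern_blockIdx]

theorem blockVec_eq_blockPattern (j : Fin t) : blockVec t j = blockPattern j 1 := by
  funext k
  obtain ⟨j', r, rfl⟩ := exists_blockIdx_eq k
  rw [blockPattern_blockIdx, blockVec]
  by_cases h : j' = j
  · rw [if_pos h, if_pos (by simp only [val_blockIdx, h]; omega), Pi.one_apply]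
  · rw [if_neg h, if_neg (by simp only [val_blockIdx, ← Fin.val_ne_iff] at h ⊢; omega)]

theorem add_blockPattern_mem_sigmaFiber {μ : Fin t → ZMod 3} {x : Fin (3 * t) → ZMod 3}
    (hx : x ∈ sigmaFiber t μ) (j : Fin t) {v : Fin 3 → ZMod 3} (hv : ∑ r, v r = 0) :
    x + blockPattern j v ∈ sigmaFiber t μ := by
  rw [mem_sigmaFiber_iff] at hx ⊢
  intro j'
  simp only [Pi.add_apply, sum_add_distrib, blockPattern_blockIdx, hx]
  split_ifs <;> simp [hv]

theorem hammingDist_add_blockPattern {R : Type*} [AddLeftCancelMonoid R] [DecidableEq R]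
    (x : Fin (3 * t) → R) (j : Fin t) (v w : Fin 3 → R) :
    hammingDist (x + blockPattern j v) (x + blockPattern j w) = hammingDist v w := by
  rw [hammingDist_add_add_left, blockPattern, blockPattern,
    hammingDist_extend (blockIdx_injective j)]

end Blocks

/-- If `λ : σ⁻¹(μ) → Z/3` takes distinct values on tuples of the fiber at
Hamming distance 2, then `λ(x) = λ(x + e)` for `e = (1,1,1,0,…,0)`; i.e., `λ` is
invariant under adding `1` to all three coordinates of any block. -/
theorem stmt_16 (t : ℕ) (μ : Fin t → ZMod 3)
    (lam : (Fin (3 * t) → ZMod 3) → ZMod 3)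
    (hlam : ∀ x ∈ sigmaFiber t μ, ∀ y ∈ sigmaFiber t μ,
      hammingDist x y = 2 → lam x ≠ lam y) :
    ∀ x ∈ sigmaFiber t μ, ∀ j : Fin t, lam (x + blockVec t j) = lam x := by
  intro x hx j
  have conflict : ∀ v w : Fin 3 → ZMod 3, ∑ r, v r = 0 → ∑ r, w r = 0 → hammingDist v w = 2 →
      lam (x + blockPattern j v) ≠ lam (x + blockPattern j w) :=
    fun v w hv hw hvw => hlam _ (add_blockPattern_mem_sigmaFiber hx j hv) _
      (add_blockPattern_mem_sigmaFiber hx j hw) (by rwa [hammingDist_add_blockPattern])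
  have h := eq_of_ne_of_card_le_three (ZMod.card 3).le
    (a := lam (x + blockPattern j 1))
    (b := lam (x + blockPattern j ![0, 1, 2]))
    (c := lam (x + blockPattern j ![0, 2, 1]))
    (d := lam (x + blockPattern j 0))
    (conflict _ _ (by decide) (by decide) (by decide))
    (conflict _ _ (by decide) (by decide) (by decide))
    (conflict _ _ (by decide) (by decide) (by decide))
    (conflict _ _ (by decide) (by decide) (by decide))
    (conflict _ _ (by decide) (by decide) (by decide))
  rwa [blockPattern_zero, add_zero, ← blockVec_eq_blockPattern] at h
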